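/- For every n ≥ 2, the discriminant of F_n(x) satisfies disc(F_n) = (−1)^{n(n−1)/2} · (n / L_n^{n−1}) · 𝒫_n, where 𝒫_n = ∏_θ F̃_n(θ) with θ ranging over the nontrivial n-th roots of unity in ℂ. -/

import Mathlib

open Polynomial BigOperators

/-- `F n` is the truncated logarithmic polynomial `1 + x + x²/2 + ⋯ + xⁿ/n ∈ ℚ[x]`. -/
noncomputable def F (n : ℕ) : Polynomial ℚ :=
  1 + ∑ k ∈ Finset.Icc 1 n, Polynomial.C ((k : ℚ)⁻¹) * Polynomial.X ^ k

/-- `Ln n = lcm {1, 2, …, n}`. -/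
def Ln (n : ℕ) : ℕ := (Finset.Icc 1 n).lcm id

/-- `Ftilde n = Ln n • F n`, a polynomial with integer coefficients. -/
noncomputable def Ftilde (n : ℕ) : Polynomial ℚ := Polynomial.C ((Ln n : ℚ)) * F n

/-- The resultant `Res(P, Q)` of two polynomials over `ℚ`, computed in `ℂ` via the
product formula `Res(P,Q) = lc(P)^(deg Q) * ∏_{P(r)=0} Q(r)` (roots with multiplicity). -/
noncomputable def resC (P Q : Polynomial ℚ) : ℂ :=
  ((P.leadingCoeff : ℂ)) ^ Q.natDegree *
    ((P.map (algebraMap ℚ ℂ)).roots.map (fun r => (Q.map (algebraMap ℚ ℂ)).eval r)).prod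

/-- The discriminant `disc P = (−1)^(n(n−1)/2) ⬝ a_n⁻¹ ⬝ Res(P, P′)`, as a complex number. -/
noncomputable def discC (P : Polynomial ℚ) : ℂ :=
  (-1) ^ (P.natDegree.choose 2) * ((P.leadingCoeff : ℂ))⁻¹ * resC P (Polynomial.derivative P)

/-- `𝒫 n = ∏_θ F̃_n(θ)`, the product over the nontrivial `n`-th roots of unity in `ℂ`. -/
noncomputable def P (n : ℕ) : ℂ :=
  ∏ θ ∈ (Polynomial.nthRootsFinset n (1 : ℂ)).erase 1, (Polynomial.aeval θ) (Ftilde n)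

/-- `Xc m ω = ∏_{k=1}^{m−1} (1/m + ω^k + ω^{2k}/2 + ⋯ + ω^{(m−1)k}/(m−1))`. -/
noncomputable def Xc (m : ℕ) (ω : ℂ) : ℂ :=
  ∏ k ∈ Finset.Icc 1 (m - 1), ((m : ℂ)⁻¹ + ∑ j ∈ Finset.Icc 1 (m - 1), ω ^ (j * k) / (j : ℂ))

/-- `Y m = 1 + 1/2 + ⋯ + 1/m ∈ ℚ`. -/
def Y (m : ℕ) : ℚ := ∑ j ∈ Finset.Icc 1 m, (j : ℚ)⁻¹

/-!
Since `F_n' = 1 + x + ⋯ + x^(n-1) = (x^n - 1)/(x - 1)` is monic with the nontrivial `n`-th roots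
of unity as its roots, swapping the arguments of the resultant gives
`Res(F_n, F_n') = (-1)^(n(n-1)) ∏_θ F_n(θ) = ∏_θ F_n(θ)`. Dividing by the leading coefficient
`1/n` of `F_n` and clearing denominators with `L_n` in each of the `n - 1` factors yields the formula.
-/

lemma resultant_eq_prod_eval_roots_right {K : Type*} [Field K] (f g : K[X]) (hg : g.Splits) :
    resultant f g = (-1) ^ (f.natDegree * g.natDegree) * g.leadingCoeff ^ f.natDegree *
      (g.roots.map f.eval).prod := by
  rw [resultant_comm, resultant_eq_prod_eval g f _ le_rfl hg, mul_assoc]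

lemma resC_eq_resultant (p q : ℚ[X]) :
    resC p q = resultant (p.map (algebraMap ℚ ℂ)) (q.map (algebraMap ℚ ℂ)) := by
  rw [resultant_eq_prod_eval _ _ _ le_rfl (IsAlgClosed.splits _)]
  simp [resC]

lemma roots_geom_sum_X {R : Type*} [CommRing R] [IsDomain R] [DecidableEq R] (n : ℕ) :
    (∑ i ∈ Finset.range n, (X : R[X]) ^ i).roots = (nthRoots n (1 : R)).erase 1 := by
  rcases Nat.eq_zero_or_pos n with rfl | hn
  · simp
  have hmul : (∑ i ∈ Finset.range n, (X : R[X]) ^ i) * (X - C 1) = X ^ n - C 1 := by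
    simpa using geom_sum_mul (X : R[X]) n
  have hne : (X ^ n - C 1 : R[X]) ≠ 0 := X_pow_sub_C_ne_zero hn 1
  rw [nthRoots.eq_1, ← hmul, roots_mul (hmul ▸ hne), roots_X_sub_C, ← Multiset.cons_zero,
    Multiset.add_cons, add_zero, Multiset.erase_cons_head]

lemma prod_erase_one_nthRootsFinset {R M : Type*} [CommRing R] [IsDomain R] [DecidableEq R]
    [CommMonoid M] {n : ℕ} (hn : (nthRoots n (1 : R)).Nodup) (f : R → M) :
    ∏ θ ∈ (nthRootsFinset n (1 : R)).erase 1, f θ = (((nthRoots n (1 : R)).erase 1).map f).prod := by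
  rw [Finset.prod_eq_multiset_prod, Finset.erase_val, nthRootsFinset_def, Multiset.toFinset_val,
    hn.dedup]

lemma derivative_F (n : ℕ) : derivative (F n) = ∑ i ∈ Finset.range n, X ^ i := by
  rw [F, map_add, derivative_one, zero_add, map_sum, ← Finset.Ico_add_one_right_eq_Icc,
    Finset.sum_Ico_eq_sum_range, Nat.add_sub_cancel]
  refine Finset.sum_congr rfl fun k _ => ?_
  rw [derivative_C_mul_X_pow, add_comm 1 k, Nat.add_sub_cancel, Nat.cast_add_one,
    inv_mul_cancel₀ (Nat.cast_add_one_ne_zero k), C_1, one_mul]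

lemma coeff_F {n k : ℕ} (hk : k ≠ 0) (hkn : k ≤ n) : (F n).coeff k = (k : ℚ)⁻¹ := by
  simp [F, coeff_one, hk, coeff_X_pow, Nat.one_le_iff_ne_zero.mpr hk, hkn]

lemma natDegree_F {n : ℕ} (hn : n ≠ 0) : (F n).natDegree = n := by
  refine natDegree_eq_of_le_of_coeff_ne_zero ?_ (by simp [coeff_F hn le_rfl, hn])
  refine natDegree_add_le_of_degree_le (by simp) (natDegree_sum_le_of_forall_le _ _ fun k hk => ?_)
  exact (natDegree_C_mul_X_pow_le _ k).trans (Finset.mem_Icc.mp hk).2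

lemma leadingCoeff_F {n : ℕ} (hn : n ≠ 0) : (F n).leadingCoeff = (n : ℚ)⁻¹ := by
  rw [leadingCoeff, natDegree_F hn, coeff_F hn le_rfl]

lemma Ln_ne_zero (n : ℕ) : Ln n ≠ 0 := by
  simp only [Ln, Ne, Finset.lcm_eq_zero_iff, Finset.mem_Icc, id]
  omega

lemma resC_F_derivative_F {n : ℕ} (hn : n ≠ 0) :
    resC (F n) (derivative (F n)) = ∏ θ ∈ (nthRootsFinset n (1 : ℂ)).erase 1, aeval θ (F n) := by
  have hG : (∑ i ∈ Finset.range n, X ^ i : ℚ[X]).map (algebraMap ℚ ℂ) =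
      ∑ i ∈ Finset.range n, X ^ i := by
    simp [Polynomial.map_sum]
  rw [resC_eq_resultant, resultant_eq_prod_eval_roots_right _ _ (IsAlgClosed.splits _),
    natDegree_map, natDegree_map, natDegree_derivative, natDegree_F hn,
    (Nat.even_mul_pred_self n).neg_one_pow, one_mul, derivative_F, hG,
    (monic_geom_sum_X hn).leadingCoeff, one_pow, one_mul, roots_geom_sum_X,
    prod_erase_one_nthRootsFinset (Complex.isPrimitiveRoot_exp n hn).nthRoots_one_nodup]
  simp only [eval_map_algebraMap]

lemma P_eq_Ln_pow_mul_prod {n : ℕ} (hn : n ≠ 0) :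
    P n = (Ln n : ℂ) ^ (n - 1) * ∏ θ ∈ (nthRootsFinset n (1 : ℂ)).erase 1, aeval θ (F n) := by
  simp only [P, Ftilde, map_mul, aeval_C, Finset.prod_mul_distrib, Finset.prod_const]
  rw [Finset.card_erase_of_mem (one_mem_nthRootsFinset (Nat.pos_of_ne_zero hn)),
    (Complex.isPrimitiveRoot_exp n hn).card_nthRootsFinset]
  simp

/-- For `n ≥ 2`,
`disc(F n) = (−1)^(n(n−1)/2) ⬝ (n / L_n^(n−1)) ⬝ 𝒫 n`. -/
theorem stmt12 (n : ℕ) (hn : 2 ≤ n) :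
    discC (F n) = (-1) ^ (n.choose 2) * ((n : ℂ) / (Ln n : ℂ) ^ (n - 1)) * P n := by
  have hn0 : n ≠ 0 := by omega
  have hnC : (n : ℂ) ≠ 0 := by exact_mod_cast hn0
  have hL : (Ln n : ℂ) ≠ 0 := by exact_mod_cast Ln_ne_zero n
  rw [discC, resC_F_derivative_F hn0, P_eq_Ln_pow_mul_prod hn0, natDegree_F hn0,
    leadingCoeff_F hn0]
  push_cast
  field_simp
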